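/- Condition (NA) is preserved under composition with continuous functions that diverge at ±∞: let X satisfy condition (NA), and let f : ℝ → ℝ be a continuous function satisfying either lim_{x→−∞} f(x) = −∞ and lim_{x→+∞} f(x) = +∞, or lim_{x→−∞} f(x) = +∞ and lim_{x→+∞} f(x) = −∞. Then the process (f(X_t))_{t∈[0,T]} also satisfies condition (NA); that is, for every h ∈ (0,T), every stopping time τ taking values in [0, T−h), every C > 0, and every A ∈ 𝓕_τ with P(A) > 0, both P(A ∩ {sup_{t∈[h,T−τ)} (f(X_{τ+t}) − f(X_τ)) < −C}) > 0 and P(A ∩ {inf_{t∈[h,T−τ)} (f(X_{τ+t}) − f(X_τ)) > C}) > 0. -/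

import Mathlib

open MeasureTheory Set Filter

noncomputable section

/-- The event `F_X^1(τ, h, ∞, c) = {sup_{t∈[h,T−τ)} (X_{τ+t} − X_τ) < −c}`. -/
def FXevInfPos {Ω : Type*} (X : ℝ → Ω → ℝ) (T : ℝ) (τ : Ω → ℝ) (h c : ℝ) : Set Ω :=
  {ω | sSup ((fun t => X (τ ω + t) ω - X (τ ω) ω) '' Ico h (T - τ ω)) < -c}

/-- The event `F_X^{−1}(τ, h, ∞, c) = {inf_{t∈[h,T−τ)} (X_{τ+t} − X_τ) > c}`. -/
def FXevInfNeg {Ω : Type*} (X : ℝ → Ω → ℝ) (T : ℝ) (τ : Ω → ℝ) (h c : ℝ) : Set Ω :=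
  {ω | c < sInf ((fun t => X (τ ω + t) ω - X (τ ω) ω) '' Ico h (T - τ ω))}

/-- Condition (NA) of the paper (condition (4.1)): for every `h ∈ (0,T)`, every stopping
time `τ` with values in `[0, T−h)` and every `c > 0`, both
`P(F_X^1(τ,h,∞,c) | ℱ_τ) > 0` and `P(F_X^{−1}(τ,h,∞,c) | ℱ_τ) > 0` almost surely. -/
def CondNA {Ω : Type*} {m : MeasurableSpace Ω} (P : Measure Ω) (ℱ : Filtration ℝ m)
    (T : ℝ) (X : ℝ → Ω → ℝ) : Prop :=
  ∀ h ∈ Ioo (0:ℝ) T, ∀ (τ : Ω → ℝ) (hτ : IsStoppingTime ℱ (fun ω => (τ ω : WithTop ℝ))),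
    (∀ ω, τ ω ∈ Ico (0:ℝ) (T - h)) → ∀ c > (0:ℝ),
    (∀ᵐ ω ∂P, 0 < (P[(FXevInfPos X T τ h c).indicator (fun _ => (1:ℝ)) |
        hτ.measurableSpace]) ω) ∧
    (∀ᵐ ω ∂P, 0 < (P[(FXevInfNeg X T τ h c).indicator (fun _ => (1:ℝ)) |
        hτ.measurableSpace]) ω)

/-! If `f → -∞` at `-∞`, then on the `ℱ_τ`-event `{|X_τ| ≤ M}` the value `f (X_τ)` is bounded
below, so once `X` stays more than a suitable `c = c(f, M, C)` below `X_τ` on the whole window,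
`f ∘ X` stays more than `C` below `f (X_τ)`. Condition (NA) for `X` makes this event charge every
`ℱ_τ`-set of positive measure, and `M` is chosen so that `A ∩ {|X_τ| ≤ M}` still has positive
measure. Replacing `X` by `-X`, or `f` by `-f`, covers the other limits. -/

namespace MeasureTheory

variable {Ω : Type*} {m : MeasurableSpace Ω}

def Filtration.maxZero (ℱ : Filtration ℝ m) : Filtration ℝ m where
  seq t := ℱ (max t 0)
  mono' _ _ hst := ℱ.mono (max_le_max hst le_rfl)
  le' _ := ℱ.le _

lemma Filtration.maxZero_apply (ℱ : Filtration ℝ m) (t : ℝ) : ℱ.maxZero t = ℱ (max t 0) := rfl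

variable {ℱ : Filtration ℝ m} {τ : Ω → WithTop ℝ}

lemma setOf_le_eq_empty_of_neg (hτ₀ : ∀ ω, 0 ≤ τ ω) {t : ℝ} (ht : t < 0) :
    {ω | τ ω ≤ t} = ∅ :=
  eq_empty_of_forall_notMem fun ω hω =>
    (WithTop.coe_lt_coe.2 ht).not_ge ((hτ₀ ω).trans hω)

lemma IsStoppingTime.maxZero (hτ : IsStoppingTime ℱ τ) (hτ₀ : ∀ ω, 0 ≤ τ ω) :
    IsStoppingTime ℱ.maxZero τ := by
  intro t
  rcases le_or_gt 0 t with ht | ht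
  · exact ℱ.mono (le_max_left t 0) _ (hτ t)
  · rw [setOf_le_eq_empty_of_neg hτ₀ ht]
    exact @MeasurableSet.empty _ (ℱ.maxZero t)

lemma IsStoppingTime.measurableSpace_maxZero_le (hτ : IsStoppingTime ℱ τ)
    (hτ₀ : ∀ ω, 0 ≤ τ ω) : (hτ.maxZero hτ₀).measurableSpace ≤ hτ.measurableSpace := by
  intro s hs
  rw [IsStoppingTime.measurableSet] at hs ⊢
  refine ⟨iSup_le (fun t => le_iSup (fun i => ℱ i) (max t 0)) s hs.1, fun t => ?_⟩
  rcases le_or_gt 0 t with ht | ht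
  · have := hs.2 t
    rwa [Filtration.maxZero_apply, max_eq_left ht] at this
  · rw [setOf_le_eq_empty_of_neg hτ₀ ht, inter_empty]
    exact @MeasurableSet.empty _ (ℱ t)

/-- Extending `X` by `X 0` before time `0` and by `X T` after time `T` gives a continuous
process, adapted to `ℱ.maxZero`, to which `measurable_stoppedValue` applies. -/
theorem measurable_stoppedValue_of_continuousOn {β : Type*} [TopologicalSpace β]
    [TopologicalSpace.PseudoMetrizableSpace β]
    [SecondCountableTopology β] [MeasurableSpace β] [BorelSpace β] {T : ℝ} (hT : 0 ≤ T)
    {X : ℝ → Ω → β} (hX : Adapted ℱ X) (hXc : ∀ ω, ContinuousOn (fun t => X t ω) (Icc 0 T))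
    {τ : Ω → ℝ} (hτ : IsStoppingTime ℱ (fun ω => (τ ω : WithTop ℝ)))
    (hτT : ∀ ω, τ ω ∈ Icc 0 T) :
    Measurable[hτ.measurableSpace] (fun ω => X (τ ω) ω) := by
  have hτ₀ : ∀ ω, (0 : WithTop ℝ) ≤ τ ω := fun ω => WithTop.coe_le_coe.2 (hτT ω).1
  let Y : ℝ → Ω → β := fun t => X (projIcc 0 T hT t)
  have hY : StronglyAdapted ℱ.maxZero Y := fun t =>
    (hX _).stronglyMeasurable.mono (ℱ.mono (max_le (le_max_right _ _)
      ((min_le_right _ _).trans (le_max_left _ _))))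
  have hYc : ∀ ω, Continuous fun t => Y t ω := fun ω =>
    (hXc ω).comp_continuous (continuous_subtype_val.comp continuous_projIcc) fun t =>
      (projIcc 0 T hT t).2
  have hYτ : stoppedValue Y (fun ω => (τ ω : WithTop ℝ)) = fun ω => X (τ ω) ω := by
    funext ω
    simp [stoppedValue, Y, projIcc_of_mem hT (hτT ω)]
  have := measurable_stoppedValue (hY.isStronglyProgressive_of_continuous hYc) (hτ.maxZero hτ₀)
  rw [hYτ] at this
  exact this.mono (hτ.measurableSpace_maxZero_le hτ₀) le_rfl

end MeasureTheory

lemma Real.sSup_lt_iff_of_nonpos {s : Set ℝ} {a : ℝ} (ha : a ≤ 0) :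
    sSup s < a ↔ s.Nonempty ∧ ∃ b < a, ∀ x ∈ s, x ≤ b := by
  refine ⟨fun hs => ⟨?_, sSup s, hs, fun x hx => le_csSup ?_ hx⟩, ?_⟩
  · by_contra hne
    rw [not_nonempty_iff_eq_empty.1 hne, Real.sSup_empty] at hs
    linarith
  · by_contra hbdd
    rw [Real.sSup_of_not_bddAbove hbdd] at hs
    linarith
  · rintro ⟨hne, b, hba, hb⟩
    exact (csSup_le hne hb).trans_lt hba

lemma MeasureTheory.measure_inter_pos_of_condExp_indicator_pos {Ω : Type*}
    {m m₀ : MeasurableSpace Ω} (hm : m ≤ m₀) {μ : Measure Ω} [IsFiniteMeasure μ] {A F : Set Ω}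
    (hA : MeasurableSet[m] A) (hμA : 0 < μ A)
    (hF : ∀ᵐ ω ∂μ, 0 < μ[F.indicator (fun _ => (1:ℝ)) | m] ω) :
    0 < μ (A ∩ F) := by
  have hint : Integrable (F.indicator fun _ => (1:ℝ)) μ := by
    by_contra hni
    rw [condExp_of_not_integrable hni] at hF
    have hμ : μ = 0 := by simpa using hF
    simp [hμ] at hμA
  set g := μ[F.indicator (fun _ => (1:ℝ)) | m]
  by_contra! hAF
  have hF_null : ∀ᵐ ω ∂μ.restrict A, ω ∉ F := by
    rw [ae_iff, Measure.restrict_apply' (hm _ hA)]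
    simpa [inter_comm] using hAF
  have hg_int : ∫ ω in A, g ω ∂μ = 0 := by
    rw [setIntegral_condExp hm hint hA]
    exact integral_eq_zero_of_ae (hF_null.mono fun ω hω => indicator_of_notMem hω _)
  have hg_zero : g =ᵐ[μ.restrict A] 0 :=
    (integral_eq_zero_iff_of_nonneg_ae
      (ae_restrict_of_ae (condExp_nonneg (Eventually.of_forall fun ω =>
        indicator_nonneg (fun _ _ => zero_le_one) ω)))
      integrable_condExp.integrableOn).1 hg_int
  have : ∀ᵐ ω ∂μ.restrict A, False := by
    filter_upwards [ae_restrict_of_ae hF, hg_zero] with ω hpos hzero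
    exact hpos.ne' hzero
  exact hμA.ne' (ae_restrict_eq_bot.1 (eventually_false_iff_eq_bot.1 this))

lemma MeasureTheory.exists_measure_inter_preimage_Icc_pos {Ω : Type*} [MeasurableSpace Ω]
    {μ : Measure Ω} {A : Set Ω} (hA : 0 < μ A) (g : Ω → ℝ) :
    ∃ M : ℝ, 0 < μ (A ∩ g ⁻¹' Icc (-M) M) := by
  have hcover : A = ⋃ n : ℕ, A ∩ g ⁻¹' Icc (-n) n := by
    refine (subset_antisymm (fun ω hω => ?_) (iUnion_subset fun _ => inter_subset_left))
    obtain ⟨n, hn⟩ := exists_nat_ge |g ω|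
    exact mem_iUnion.2 ⟨n, hω, abs_le.1 hn⟩
  obtain ⟨n, hn⟩ := exists_measure_pos_of_not_measure_iUnion_null (hcover ▸ hA.ne')
  exact ⟨n, hn⟩

section Events

variable {Ω : Type*}

lemma FXevInfPos_neg (X : ℝ → Ω → ℝ) (T : ℝ) (τ : Ω → ℝ) (h c : ℝ) :
    FXevInfPos (fun t ω => -X t ω) T τ h c = FXevInfNeg X T τ h c := by
  ext ω
  have himage : (fun t => -X (τ ω + t) ω - -X (τ ω) ω) '' Ico h (T - τ ω) =
      -((fun t => X (τ ω + t) ω - X (τ ω) ω) '' Ico h (T - τ ω)) := by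
    rw [← image_neg_eq_neg, image_image]
    exact image_congr fun t _ => by ring
  simp only [FXevInfPos, FXevInfNeg, mem_ofPred_eq, himage, Real.sInf_def, lt_neg]

lemma FXevInfNeg_neg (X : ℝ → Ω → ℝ) (T : ℝ) (τ : Ω → ℝ) (h c : ℝ) :
    FXevInfNeg (fun t ω => -X t ω) T τ h c = FXevInfPos X T τ h c := by
  simpa only [neg_neg] using (FXevInfPos_neg (fun t ω => -X t ω) T τ h c).symm

lemma exists_inter_FXevInfPos_subset_comp {f : ℝ → ℝ} (hf : Continuous f)
    (hbot : Tendsto f atBot atBot) (M C : ℝ) :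
    ∃ c > 0, ∀ (X : ℝ → Ω → ℝ) (T : ℝ) (τ : Ω → ℝ) (h : ℝ),
      {ω | X (τ ω) ω ∈ Icc (-M) M} ∩ FXevInfPos X T τ h c ⊆
        FXevInfPos (fun t ω => f (X t ω)) T τ h C := by
  obtain ⟨m, hm⟩ := (isCompact_Icc (a := -M) (b := M)).bddBelow_image hf.continuousOn
  obtain ⟨K, hK⟩ := eventually_atBot.1 (hbot.eventually_le_atBot (m - C - 1))
  refine ⟨max (M - K) 1, lt_max_of_lt_right one_pos, fun X T τ h ω ⟨hωM, hω⟩ => ?_⟩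
  obtain ⟨hne, b, hb, hfall⟩ :=
    (Real.sSup_lt_iff_of_nonpos (neg_nonpos.2 (le_max_of_le_right zero_le_one))).1 hω
  refine (csSup_le (hne.of_image.image _) ?_).trans_lt (sub_one_lt (-C))
  rintro _ ⟨t, ht, rfl⟩
  have hXK : X (τ ω + t) ω ≤ K := by
    have := hfall _ (mem_image_of_mem _ ht)
    linarith [le_max_left (M - K) 1, hωM.2]
  linarith [hK _ hXK, hm (mem_image_of_mem f hωM)]

end Events

namespace CondNA

variable {Ω : Type*} {m : MeasurableSpace Ω} {P : Measure Ω} {ℱ : Filtration ℝ m} {T : ℝ}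
  {X : ℝ → Ω → ℝ}

protected lemma neg (hNA : CondNA P ℱ T X) : CondNA P ℱ T (fun t ω => -X t ω) := by
  intro h hh τ hτ hτT c hc
  rw [FXevInfPos_neg, FXevInfNeg_neg]
  exact (hNA h hh τ hτ hτT c hc).symm

variable [IsFiniteMeasure P] (hNA : CondNA P ℱ T X) (hX : Adapted ℱ X)
  (hXc : ∀ ω, ContinuousOn (fun t => X t ω) (Icc 0 T)) {f : ℝ → ℝ} (hf : Continuous f)
  {h : ℝ} (hh : h ∈ Ioo 0 T) {τ : Ω → ℝ} (hτ : IsStoppingTime ℱ (fun ω => (τ ω : WithTop ℝ)))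
  (hτT : ∀ ω, τ ω ∈ Ico 0 (T - h)) (C : ℝ) {A : Set Ω}
  (hA : MeasurableSet[hτ.measurableSpace] A) (hPA : 0 < P A)
include hNA hX hXc hf hh hτT hA hPA

lemma measure_inter_FXevInfPos_comp_pos_of_atBot (hbot : Tendsto f atBot atBot) :
    0 < P (A ∩ FXevInfPos (fun t ω => f (X t ω)) T τ h C) := by
  have hXτ : Measurable[hτ.measurableSpace] fun ω => X (τ ω) ω :=
    measurable_stoppedValue_of_continuousOn (hh.1.trans hh.2).le hX hXc hτ fun ω =>
      ⟨(hτT ω).1, by linarith [(hτT ω).2, hh.1]⟩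
  obtain ⟨M, hM⟩ := exists_measure_inter_preimage_Icc_pos hPA fun ω => X (τ ω) ω
  obtain ⟨c, hc, hsub⟩ := exists_inter_FXevInfPos_subset_comp hf hbot M C
  calc 0 < P ((A ∩ (fun ω => X (τ ω) ω) ⁻¹' Icc (-M) M) ∩ FXevInfPos X T τ h c) :=
        measure_inter_pos_of_condExp_indicator_pos hτ.measurableSpace_le
          (hA.inter (hXτ measurableSet_Icc)) hM (hNA h hh τ hτ hτT c hc).1
    _ ≤ P (A ∩ FXevInfPos (fun t ω => f (X t ω)) T τ h C) :=
        measure_mono fun ω ⟨⟨hωA, hωM⟩, hω⟩ => ⟨hωA, hsub X T τ h ⟨hωM, hω⟩⟩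

lemma measure_inter_FXevInfPos_comp_pos
    (hlim : Tendsto f atBot atBot ∨ Tendsto f atTop atBot) :
    0 < P (A ∩ FXevInfPos (fun t ω => f (X t ω)) T τ h C) := by
  rcases hlim with hbot | htop
  · exact hNA.measure_inter_FXevInfPos_comp_pos_of_atBot hX hXc hf hh hτ hτT C hA hPA hbot
  · simpa only [Function.comp_apply, neg_neg] using
      hNA.neg.measure_inter_FXevInfPos_comp_pos_of_atBot (fun t => (hX t).neg)
        (fun ω => (hXc ω).neg) (hf.comp continuous_neg) hh hτ hτT C hA hPA
        (htop.comp tendsto_neg_atBot_atTop)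

end CondNA

theorem condNA_stable_under_composition_general {Ω : Type*} {m : MeasurableSpace Ω} (P : Measure Ω)
    [IsProbabilityMeasure P] (ℱ : Filtration ℝ m) (T : ℝ)
    (X : ℝ → Ω → ℝ) (hadp : Adapted ℱ X)
    (hcont : ∀ ω, ContinuousOn (fun t => X t ω) (Icc 0 T))
    (hNA : CondNA P ℱ T X)
    (f : ℝ → ℝ) (hf : Continuous f)
    (hlim : (Tendsto f atBot atBot ∧ Tendsto f atTop atTop) ∨
            (Tendsto f atBot atTop ∧ Tendsto f atTop atBot)) :
    ∀ h ∈ Ioo (0:ℝ) T, ∀ (τ : Ω → ℝ) (hτ : IsStoppingTime ℱ (fun ω => (τ ω : WithTop ℝ))),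
      (∀ ω, τ ω ∈ Ico (0:ℝ) (T - h)) → ∀ C > (0:ℝ),
      ∀ A : Set Ω, MeasurableSet[hτ.measurableSpace] A → 0 < P A →
      0 < P (A ∩ FXevInfPos (fun t ω => f (X t ω)) T τ h C) ∧
      0 < P (A ∩ FXevInfNeg (fun t ω => f (X t ω)) T τ h C) := by
  intro h hh τ hτ hτT C _ A hA hPA
  have hpos {g : ℝ → ℝ} (hg : Continuous g)
      (hg_lim : Tendsto g atBot atBot ∨ Tendsto g atTop atBot) :=
    hNA.measure_inter_FXevInfPos_comp_pos hadp hcont hg hh hτ hτT C hA hPA hg_lim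
  refine ⟨hpos hf (hlim.imp And.left And.right), ?_⟩
  rw [← FXevInfPos_neg]
  exact hpos hf.neg (hlim.symm.imp (tendsto_neg_atTop_atBot.comp ∘ And.left)
    (tendsto_neg_atTop_atBot.comp ∘ And.right))

/-- Theorem 4.2 of the paper: condition (NA) is preserved under composition with a
continuous function `f` diverging to `∓∞` at `∓∞` (or to `±∞` at `∓∞`): if `X` satisfies
(NA), then for every `h ∈ (0,T)`, every stopping time `τ` with values in `[0, T−h)`, every
`C > 0` and every `A ∈ ℱ_τ` with `P(A) > 0`, both
`P(A ∩ {sup_{t∈[h,T−τ)} (f(X_{τ+t}) − f(X_τ)) < −C}) > 0` and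
`P(A ∩ {inf_{t∈[h,T−τ)} (f(X_{τ+t}) − f(X_τ)) > C}) > 0`. -/
theorem condNA_stable_under_composition {Ω : Type*} {m : MeasurableSpace Ω} (P : Measure Ω)
    [IsProbabilityMeasure P] (ℱ : Filtration ℝ m) (T : ℝ) (hT : 0 < T)
    (X : ℝ → Ω → ℝ) (hadp : Adapted ℱ X)
    (hcont : ∀ ω, ContinuousOn (fun t => X t ω) (Icc 0 T))
    (htriv : ∀ s : Set Ω, MeasurableSet[ℱ 0] s → P s = 0 ∨ P s = 1)
    (hNA : CondNA P ℱ T X)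
    (f : ℝ → ℝ) (hf : Continuous f)
    (hlim : (Tendsto f atBot atBot ∧ Tendsto f atTop atTop) ∨
            (Tendsto f atBot atTop ∧ Tendsto f atTop atBot)) :
    ∀ h ∈ Ioo (0:ℝ) T, ∀ (τ : Ω → ℝ) (hτ : IsStoppingTime ℱ (fun ω => (τ ω : WithTop ℝ))),
      (∀ ω, τ ω ∈ Ico (0:ℝ) (T - h)) → ∀ C > (0:ℝ),
      ∀ A : Set Ω, MeasurableSet[hτ.measurableSpace] A → 0 < P A →
      0 < P (A ∩ FXevInfPos (fun t ω => f (X t ω)) T τ h C) ∧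
      0 < P (A ∩ FXevInfNeg (fun t ω => f (X t ω)) T τ h C) :=
  condNA_stable_under_composition_general P ℱ T X hadp hcont hNA f hf hlim

end
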